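/- Let X and Y be locally compact Hausdorff spaces and let φ : C₀(Y) → C_b(X) be a nondegenerate ⋆-homomorphism. Then for every x ∈ X, the map a ↦ φ(a)(x) is a nonzero ⋆-algebra homomorphism from C₀(Y) to ℂ (i.e., the composition of φ with evaluation at x is a nonzero character of C₀(Y)). -/

import Mathlib

/-!
Composing `φ` with evaluation at `x` is automatically a ⋆-homomorphism; the point is that it is
nonzero. If every `φ a` vanished at `x`, then evaluation at `x`, a continuous linear functional
on `C₀(X)`, would vanish on a set whose linear span is dense, hence on all of `C₀(X)`. But by
Urysohn's lemma some compactly supported function takes the value `1` at `x`.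
-/

open scoped ZeroAtInfty BoundedContinuousFunction

/-- A ⋆-homomorphism `φ : C₀(Y) → C_b(X) = M(C₀(X))` is *nondegenerate* if the closed
linear span of the products `φ a · b` (with `a ∈ C₀(Y)`, `b ∈ C₀(X)`), which all lie
in `C₀(X)`, equals `C₀(X)`. -/
def NondegenerateC0 {X Y : Type*} [TopologicalSpace X] [TopologicalSpace Y]
    (φ : C₀(Y, ℂ) →⋆ₙₐ[ℂ] (X →ᵇ ℂ)) : Prop :=
  closure ((Submodule.span ℂ
      {h : C₀(X, ℂ) | ∃ (a : C₀(Y, ℂ)) (b : C₀(X, ℂ)), ∀ x, h x = φ a x * b x} :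
        Submodule ℂ C₀(X, ℂ)) : Set C₀(X, ℂ)) = Set.univ

namespace BoundedContinuousFunction

variable (𝕜 : Type*) {α β : Type*} [TopologicalSpace α] [SeminormedCommRing 𝕜] [StarRing 𝕜]
  [NonUnitalSeminormedRing β] [StarRing β] [NormedStarGroup β] [Module 𝕜 β]
  [IsBoundedSMul 𝕜 β] [StarModule 𝕜 β]

@[simps]
def evalNonUnitalStarAlgHom (x : α) : (α →ᵇ β) →⋆ₙₐ[𝕜] β where
  toFun f := f x
  map_smul' _ _ := rfl
  map_zero' := rfl
  map_add' _ _ := rfl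
  map_mul' _ _ := rfl
  map_star' _ := rfl

end BoundedContinuousFunction

namespace ZeroAtInftyContinuousMap

variable (𝕜 : Type*) {α β : Type*} [TopologicalSpace α] [NormedField 𝕜]
  [NormedAddCommGroup β] [NormedSpace 𝕜 β]

@[simps apply]
def evalCLM (x : α) : C₀(α, β) →L[𝕜] β where
  toFun f := f x
  map_add' _ _ := rfl
  map_smul' _ _ := rfl
  cont := (continuous_eval_const (F := α →ᵇ β) x).comp isometry_toBCF.continuous

theorem exists_apply_eq_one {𝕜 : Type*} [RCLike 𝕜] [RegularSpace α] [LocallyCompactSpace α]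
    (x : α) : ∃ f : C₀(α, 𝕜), f x = 1 := by
  obtain ⟨g, hg_one, -, hg_supp, -⟩ := exists_continuous_one_zero_of_isCompact
    isCompact_singleton isClosed_empty (Set.disjoint_empty {x})
  let f : C(α, 𝕜) := ⟨fun y ↦ (g y : 𝕜), RCLike.continuous_ofReal.comp g.continuous⟩
  refine ⟨⟨f, (hg_supp.comp_left (g := ((↑) : ℝ → 𝕜)) RCLike.ofReal_zero).is_zero_at_infty⟩, ?_⟩
  simp [f, hg_one rfl]

end ZeroAtInftyContinuousMap

theorem NondegenerateC0.exists_apply_ne_zero {X Y : Type*} [TopologicalSpace X]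
    [RegularSpace X] [LocallyCompactSpace X] [TopologicalSpace Y]
    {φ : C₀(Y, ℂ) →⋆ₙₐ[ℂ] (X →ᵇ ℂ)} (hφ : NondegenerateC0 φ) (x : X) :
    ∃ a, φ a x ≠ 0 := by
  by_contra! hφx
  have h_eval_zero : ZeroAtInftyContinuousMap.evalCLM ℂ (β := ℂ) x = 0 := by
    refine ContinuousLinearMap.ext_on (dense_iff_closure_eq.mpr hφ) ?_
    rintro _ ⟨a, b, hab⟩
    simp [hab, hφx]
  obtain ⟨b, hb⟩ := ZeroAtInftyContinuousMap.exists_apply_eq_one (𝕜 := ℂ) x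
  simpa [hb] using congr($h_eval_zero b)

theorem eval_comp_nondegenerate_hom_is_nonzero_character_general
    {X Y : Type*} [TopologicalSpace X] [LocallyCompactSpace X] [T2Space X]
    [TopologicalSpace Y]
    (φ : C₀(Y, ℂ) →⋆ₙₐ[ℂ] (X →ᵇ ℂ)) (hφ : NondegenerateC0 φ) :
    ∀ x : X, ∃ χ : C₀(Y, ℂ) →⋆ₙₐ[ℂ] ℂ, (∀ a : C₀(Y, ℂ), χ a = φ a x) ∧ χ ≠ 0 := by
  intro x
  obtain ⟨a, ha⟩ := hφ.exists_apply_ne_zero x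
  refine ⟨(BoundedContinuousFunction.evalNonUnitalStarAlgHom ℂ x).comp φ, fun _ ↦ rfl, ?_⟩
  exact fun hχ ↦ ha congr($hχ a)

/-- If `φ : C₀(Y) → C_b(X)` is a nondegenerate ⋆-homomorphism, then for every `x ∈ X`
the composition of `φ` with evaluation at `x` is a nonzero character of `C₀(Y)`. -/
theorem eval_comp_nondegenerate_hom_is_nonzero_character
    {X Y : Type*} [TopologicalSpace X] [LocallyCompactSpace X] [T2Space X]
    [TopologicalSpace Y] [LocallyCompactSpace Y] [T2Space Y]
    (φ : C₀(Y, ℂ) →⋆ₙₐ[ℂ] (X →ᵇ ℂ)) (hφ : NondegenerateC0 φ) :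
    ∀ x : X, ∃ χ : C₀(Y, ℂ) →⋆ₙₐ[ℂ] ℂ, (∀ a : C₀(Y, ℂ), χ a = φ a x) ∧ χ ≠ 0 :=
  eval_comp_nondegenerate_hom_is_nonzero_character_general φ hφ
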